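/- arXiv:1708.02609 — 2 statements merged into one kernel-verified Lean document; each statement's English description precedes it below -/
import Mathlib

section
/- Let (V1, V2) be a pair of commuting isometries on a Hilbert space H, and set V = V1 V2, W = H ⊖ VH, W1 = H ⊖ V1 H, W2 = H ⊖ V2 H. Then W = W1 ⊕ V1 W2 = V2 W1 ⊕ W2, where each decomposition is an orthogonal direct sum. -/
/-!
With `V = V₁V₂` we have `V* = V₂*V₁*`, and `V₁*V₁ = 1` because `V₁` is an isometry. Hence every
`x ∈ ker V*` splits as `(x - V₁V₁*x) + V₁(V₁*x)` with the first summand in `ker V₁*` and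
`V₁*x ∈ ker V₂*`; the converse inclusion is immediate. Commutativity gives `V = V₂V₁` and the
second decomposition. Both sums are orthogonal since `ker V₁* = (range V₁)ᗮ`.
-/

open ContinuousLinearMap Filter Topology Metric
open scoped InnerProductSpace

open Classical in
/-- Orthogonal projection onto a subspace, as an operator on the ambient space. -/
noncomputable def projCLM {H : Type*} [NormedAddCommGroup H] [InnerProductSpace ℂ H]
    (K : Submodule ℂ H) : H →L[ℂ] H :=
  if h : K.HasOrthogonalProjection then K.subtypeL.comp (haveI := h; K.orthogonalProjectionOnto)
  else 0

namespace ContinuousLinearMap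

variable {𝕜 E F G : Type*} [RCLike 𝕜]
  [NormedAddCommGroup E] [InnerProductSpace 𝕜 E] [CompleteSpace E]
  [NormedAddCommGroup F] [InnerProductSpace 𝕜 F] [CompleteSpace F]
  [NormedAddCommGroup G] [InnerProductSpace 𝕜 G] [CompleteSpace G]

theorem ker_adjoint_comp_eq_sup_map {A : F →L[𝕜] G} (hA : adjoint A ∘L A = 1) (B : E →L[𝕜] F) :
    LinearMap.ker (adjoint (A ∘L B) : G →ₗ[𝕜] E) =
      LinearMap.ker (adjoint A : G →ₗ[𝕜] F) ⊔
        (LinearMap.ker (adjoint B : F →ₗ[𝕜] E)).map (A : F →ₗ[𝕜] G) := by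
  have hAA (y : F) : adjoint A (A y) = y := by simpa using congr($hA y)
  rw [adjoint_comp]
  apply le_antisymm
  · intro x hx
    have hAx : adjoint B (adjoint A x) = 0 := hx
    have hres : adjoint A (x - A (adjoint A x)) = 0 := by rw [map_sub, hAA, sub_self]
    rw [← sub_add_cancel x (A (adjoint A x))]
    exact Submodule.add_mem_sup hres (Submodule.mem_map_of_mem hAx)
  · refine sup_le (fun x hx => ?_) ?_
    · show adjoint B (adjoint A x) = 0
      rw [show adjoint A x = 0 from hx, map_zero]
    · rintro _ ⟨y, hy, rfl⟩
      show adjoint B (adjoint A (A y)) = 0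
      rw [hAA]
      exact hy

theorem isOrtho_ker_adjoint_map (A : E →L[𝕜] F) (U : Submodule 𝕜 E) :
    LinearMap.ker (adjoint A : F →ₗ[𝕜] E) ⟂ U.map (A : E →ₗ[𝕜] F) := by
  rw [← orthogonal_range]
  exact Submodule.isOrtho_orthogonal_left _ |>.mono_right LinearMap.map_le_range

end ContinuousLinearMap

theorem stmt_4 {H : Type*} [NormedAddCommGroup H] [InnerProductSpace ℂ H] [CompleteSpace H]
    (V1 V2 : H →L[ℂ] H) (hV1 : ∀ x, ‖V1 x‖ = ‖x‖) (hV2 : ∀ x, ‖V2 x‖ = ‖x‖)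
    (hcomm : V1 ∘L V2 = V2 ∘L V1)
    (V : H →L[ℂ] H) (hV : V = V1 ∘L V2)
    (W W1 W2 : Submodule ℂ H)
    (hW : W = LinearMap.ker (adjoint V : H →ₗ[ℂ] H))
    (hW1 : W1 = LinearMap.ker (adjoint V1 : H →ₗ[ℂ] H))
    (hW2 : W2 = LinearMap.ker (adjoint V2 : H →ₗ[ℂ] H)) :
    W = W1 ⊔ W2.map (V1 : H →ₗ[ℂ] H) ∧
    W = W1.map (V2 : H →ₗ[ℂ] H) ⊔ W2 ∧
    (∀ x ∈ W1, ∀ y ∈ W2.map (V1 : H →ₗ[ℂ] H), ⟪x, y⟫_ℂ = 0) ∧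
    (∀ x ∈ W1.map (V2 : H →ₗ[ℂ] H), ∀ y ∈ W2, ⟪x, y⟫_ℂ = 0) := by
  subst hV hW hW1 hW2
  refine ⟨?_, ?_, ?_, ?_⟩
  · exact ker_adjoint_comp_eq_sup_map ((norm_map_iff_adjoint_comp_self V1).mp hV1) V2
  · rw [hcomm, sup_comm]
    exact ker_adjoint_comp_eq_sup_map ((norm_map_iff_adjoint_comp_self V2).mp hV2) V1
  · exact Submodule.isOrtho_iff_inner_eq.mp (isOrtho_ker_adjoint_map V1 _)
  · exact Submodule.isOrtho_iff_inner_eq.mp (isOrtho_ker_adjoint_map V2 _).symm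
end

section
/- Let (V1, V2) be commuting isometries on H with W1 = ker V1*, W2 = ker V2*. The fringe operator F2 = P_{W1} V2 |_{W1} on W1 is an isometry if and only if V2 W1 ⊆ W1 (equivalently, if and only if (V1,V2) is doubly commuting). -/
open ContinuousLinearMap Filter Topology Metric
open scoped InnerProductSpace

/-!
If `V` is an isometry, then `‖P_K (V η)‖ = ‖V η‖ = ‖η‖` exactly when `V η ∈ K`, so the fringe
operator is an isometry iff `V₂ W₁ ⊆ W₁`. For the doubly commuting condition split
`x = (x - V₁ V₁* x) + V₁ V₁* x`: the first summand lies in `W₁ = ker V₁*`, which `V₂` preserves,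
and on the second `V₁* V₂ V₁ V₁* x = V₁* V₁ V₂ V₁* x = V₂ V₁* x`.
-/

lemma projCLM_eq_starProjection {H : Type*} [NormedAddCommGroup H] [InnerProductSpace ℂ H]
    (K : Submodule ℂ H) [K.HasOrthogonalProjection] : projCLM K = K.starProjection := by
  rw [projCLM, dif_pos ‹K.HasOrthogonalProjection›]
  rfl

lemma norm_projCLM_apply_eq_iff_mem {H : Type*} [NormedAddCommGroup H] [InnerProductSpace ℂ H]
    (K : Submodule ℂ H) [K.HasOrthogonalProjection] (v : H) :
    ‖projCLM K v‖ = ‖v‖ ↔ v ∈ K := by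
  rw [projCLM_eq_starProjection, K.mem_iff_norm_starProjection]

theorem LinearMap.mapsTo_ker_iff_comp_comm {R M : Type*} [Ring R] [AddCommGroup M] [Module R M]
    {L V T : M →ₗ[R] M} (hLV : L ∘ₗ V = LinearMap.id) (hVT : V ∘ₗ T = T ∘ₗ V) :
    Set.MapsTo T (LinearMap.ker L) (LinearMap.ker L) ↔ L ∘ₗ T = T ∘ₗ L := by
  have hLV' (x : M) : L (V x) = x := LinearMap.congr_fun hLV x
  have hVT' (x : M) : V (T x) = T (V x) := LinearMap.congr_fun hVT x
  constructor
  · intro hT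
    ext x
    have hker : x - V (L x) ∈ LinearMap.ker L := by simp [hLV']
    calc L (T x) = L (T (x - V (L x))) + L (V (T (L x))) := by
          rw [hVT', ← map_add, ← map_add, sub_add_cancel]
      _ = T (L x) := by rw [hT hker, zero_add, hLV']
  · intro hLT x (hx : L x = 0)
    show L (T x) = 0
    rw [← LinearMap.comp_apply L T, hLT, LinearMap.comp_apply, hx, map_zero]

theorem stmt_14_general {H : Type*} [NormedAddCommGroup H] [InnerProductSpace ℂ H] [CompleteSpace H]
    (V1 V2 : H →L[ℂ] H) (hV1 : ∀ x, ‖V1 x‖ = ‖x‖) (hV2 : ∀ x, ‖V2 x‖ = ‖x‖)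
    (hcomm : V1 ∘L V2 = V2 ∘L V1)
    (W1 : Submodule ℂ H)
    (hW1 : W1 = LinearMap.ker (adjoint V1 : H →ₗ[ℂ] H)) :
    ((∀ η ∈ W1, ‖projCLM W1 (V2 η)‖ = ‖η‖) ↔ ∀ η ∈ W1, V2 η ∈ W1) ∧
    ((∀ η ∈ W1, ‖projCLM W1 (V2 η)‖ = ‖η‖) ↔ adjoint V1 ∘L V2 = V2 ∘L adjoint V1) := by
  have : CompleteSpace W1 := hW1 ▸ (adjoint V1).isClosed_ker.completeSpace_coe
  have isometry_iff : (∀ η ∈ W1, ‖projCLM W1 (V2 η)‖ = ‖η‖) ↔ ∀ η ∈ W1, V2 η ∈ W1 :=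
    forall₂_congr fun η _ ↦ by rw [← hV2 η, norm_projCLM_apply_eq_iff_mem]
  refine ⟨isometry_iff, isometry_iff.trans ?_⟩
  have hLV : (adjoint V1 : H →ₗ[ℂ] H) ∘ₗ (V1 : H →ₗ[ℂ] H) = LinearMap.id := by
    rw [← toLinearMap_comp, (norm_map_iff_adjoint_comp_self V1).mp hV1]
    rfl
  have hVT : (V1 : H →ₗ[ℂ] H) ∘ₗ (V2 : H →ₗ[ℂ] H) = (V2 : H →ₗ[ℂ] H) ∘ₗ (V1 : H →ₗ[ℂ] H) := by
    rw [← toLinearMap_comp, hcomm, toLinearMap_comp]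
  rw [← coe_inj, toLinearMap_comp, toLinearMap_comp, hW1]
  exact LinearMap.mapsTo_ker_iff_comp_comm hLV hVT

theorem stmt_14 {H : Type*} [NormedAddCommGroup H] [InnerProductSpace ℂ H] [CompleteSpace H]
    (V1 V2 : H →L[ℂ] H) (hV1 : ∀ x, ‖V1 x‖ = ‖x‖) (hV2 : ∀ x, ‖V2 x‖ = ‖x‖)
    (hcomm : V1 ∘L V2 = V2 ∘L V1)
    (W1 W2 : Submodule ℂ H)
    (hW1 : W1 = LinearMap.ker (adjoint V1 : H →ₗ[ℂ] H))
    (hW2 : W2 = LinearMap.ker (adjoint V2 : H →ₗ[ℂ] H)) :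
    ((∀ η ∈ W1, ‖projCLM W1 (V2 η)‖ = ‖η‖) ↔ ∀ η ∈ W1, V2 η ∈ W1) ∧
    ((∀ η ∈ W1, ‖projCLM W1 (V2 η)‖ = ‖η‖) ↔ adjoint V1 ∘L V2 = V2 ∘L adjoint V1) :=
  stmt_14_general V1 V2 hV1 hV2 hcomm W1 hW1
end
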